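/- Let T be a finite tree with at least two vertices, equipped with an edge-length function ℓ assigning a strictly positive real length to each edge, and suppose (T, ℓ) is short-branched. Let u and v be adjacent vertices of T. Then 1 − D(v,u) is strictly positive, and the quotient D(u,v)/(1 − D(v,u)) lies between 0 and 1 (inclusive). -/

import Mathlib

open scoped Classical
open Finset

noncomputable section

variable {V : Type*}

/-- A leaf of a graph is a vertex of degree one. -/
def IsLeafVertex [Fintype V] (G : SimpleGraph V) (v : V) : Prop := G.degree v = 1

/-- The finset of leaves of a graph. -/
def leafSet [Fintype V] (G : SimpleGraph V) : Finset V :=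
  Finset.univ.filter (fun v => IsLeafVertex G v)

/-- The length of a pseudometric graph: the sum of the lengths of its edges. -/
def totalLength [Fintype V] (G : SimpleGraph V) (ℓ : Sym2 V → ℝ) : ℝ :=
  ∑ e ∈ G.edgeFinset, ℓ e

/-- The leaf length of a tree: one less than its number of leaves. -/
def leafLength [Fintype V] (G : SimpleGraph V) : ℝ := ((leafSet G).card : ℝ) - 1

/-- `sideComp G u v` is the vertex set of the connected component containing `v` of the
graph obtained from `G` by deleting the vertex `u`: the set of vertices reachable from
`v` by a walk avoiding `u`. -/
def sideComp (G : SimpleGraph V) (u v : V) : Set V :=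
  {x | ∃ p : G.Walk v x, u ∉ p.support}

/-- The length of the subspace `T(u,v)`: the sum of the lengths of all edges having at
least one endpoint in `sideComp G u v`. -/
def sideLength [Fintype V] (G : SimpleGraph V) (ℓ : Sym2 V → ℝ) (u v : V) : ℝ :=
  ∑ e ∈ G.edgeFinset.filter (fun e => ∃ x ∈ e, x ∈ sideComp G u v), ℓ e

/-- The leaf length of the subspace `T(u,v)`: the number of leaves of `G` lying in
`sideComp G u v`. -/
def sideLeafCount [Fintype V] (G : SimpleGraph V) (u v : V) : ℕ :=
  ((leafSet G).filter (fun x => x ∈ sideComp G u v)).card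

/-- The deviation `D(u,v)`: the leaf length of `T(u,v)` minus the length of `T(u,v)`. -/
def deviation [Fintype V] (G : SimpleGraph V) (ℓ : Sym2 V → ℝ) (u v : V) : ℝ :=
  (sideLeafCount G u v : ℝ) - sideLength G ℓ u v

/-- The length of the branch at `(u,w)`: `ℓ {u,w}` plus the sum of the lengths of all
edges with both endpoints in `sideComp G u w`. -/
def branchLength [Fintype V] (G : SimpleGraph V) (ℓ : Sym2 V → ℝ) (u w : V) : ℝ :=
  ℓ s(u, w) + ∑ e ∈ G.edgeFinset.filter (fun e => ∀ x ∈ e, x ∈ sideComp G u w), ℓ e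

/-- A pseudometric tree is short-branched if its length equals its leaf length and the
length of every branch (at a vertex of degree at least 3) is at most its leaf length. -/
def ShortBranched [Fintype V] (G : SimpleGraph V) (ℓ : Sym2 V → ℝ) : Prop :=
  totalLength G ℓ = leafLength G ∧
  ∀ u w : V, 3 ≤ G.degree u → G.Adj u w →
    branchLength G ℓ u w ≤ (sideLeafCount G u w : ℝ)

/-- The product of the factors `D(vᵢ, vᵢ₊₁)/(1 − D(vᵢ₊₁, vᵢ))` along a list of vertices;
applied to the support of the unique path from `v` to `w` this gives the barycentric
coordinate `a(v,w)`. -/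
def pathProd [Fintype V] (G : SimpleGraph V) (ℓ : Sym2 V → ℝ) : List V → ℝ
  | a :: b :: rest =>
      (deviation G ℓ a b / (1 - deviation G ℓ b a)) * pathProd G ℓ (b :: rest)
  | _ => 1

/-!
Deleting the edge `uv` splits the tree into the side `C(u,v)` of `v` and the side `C(v,u)` of
`u`. Counting leaves and edges over this split, and using that the length of the tree is its
leaf length, gives `D(u,v) + D(v,u) = 1 - ℓ(uv)`. Hence `1 - D(v,u) = D(u,v) + ℓ(uv)`, and
everything reduces to `D(u,v) ≥ 0`. This is proved by induction on the side of `u`: if `u` is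
a leaf then `D(u,v) = 0`; if `u` has degree two and other neighbour `w` then
`D(u,v) = ℓ(uw) + D(w,u)`; if `u` has degree at least three then `T(u,v)` is the branch at
`(u,v)`, whose length is at most its leaf length because the tree is short-branched.
-/

section SideComp

open SimpleGraph

variable {G : SimpleGraph V} {u v x y : V}

lemma mem_sideComp_self (h : u ≠ v) : v ∈ sideComp G u v :=
  ⟨.nil, by simpa using h⟩

lemma notMem_sideComp : u ∉ sideComp G u v :=
  fun ⟨p, hp⟩ => hp p.end_mem_support

lemma mem_sideComp_of_adj (hx : x ∈ sideComp G u v) (hxy : G.Adj x y) (hy : y ≠ u) :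
    y ∈ sideComp G u v := by
  obtain ⟨p, hp⟩ := hx
  exact ⟨p.concat hxy, by simp [Walk.support_concat, hp, hy.symm]⟩

lemma mem_sideComp_comm (hx : x ∈ sideComp G u v) : v ∈ sideComp G u x := by
  obtain ⟨p, hp⟩ := hx
  exact ⟨p.reverse, by simpa using hp⟩

lemma sideComp_subset_of_mem (hx : x ∈ sideComp G u v) : sideComp G u x ⊆ sideComp G u v := by
  obtain ⟨p, hp⟩ := hx
  rintro y ⟨q, hq⟩
  exact ⟨p.append q, by simp [Walk.mem_support_append_iff, hp, hq]⟩

lemma mem_sideComp_of_mem_support (p : G.Walk v x) (hp : u ∉ p.support) (hy : y ∈ p.support) :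
    y ∈ sideComp G u v :=
  ⟨p.takeUntil y hy, fun h => hp (p.support_takeUntil_subset_support hy h)⟩

end SideComp

namespace SimpleGraph.IsTree

variable {G : SimpleGraph V} {u v w x : V}

lemma notMem_sideComp_swap (hT : G.IsTree) (hadj : G.Adj u v) (hx : x ∈ sideComp G u v) :
    x ∉ sideComp G v u := by
  rintro ⟨q, hq⟩
  obtain ⟨p, hp⟩ := hx
  have hbridge := isBridge_iff_forall_walk_mem_edges.mp
    (isAcyclic_iff_forall_adj_isBridge.mp hT.isAcyclic hadj) (q.append p.reverse)
  rw [Walk.edges_append, List.mem_append] at hbridge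
  rcases hbridge with h | h
  · exact hq (q.snd_mem_support_of_mem_edges h)
  · exact hp (by simpa using p.reverse.fst_mem_support_of_mem_edges h)

lemma eq_of_adj_of_mem_sideComp (hT : G.IsTree) (hv : G.Adj u v) (hx : G.Adj u x)
    (hxv : x ∈ sideComp G u v) : x = v := by
  by_contra hne
  refine hT.notMem_sideComp_swap hv hxv ⟨hx.toWalk, ?_⟩
  simp [hv.ne', Ne.symm hne]

lemma exists_adj_mem_sideComp (hT : G.IsTree) (hx : x ≠ u) :
    ∃ y, G.Adj u y ∧ x ∈ sideComp G u y := by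
  obtain ⟨p⟩ := hT.connected.preconnected u x
  have hpath := p.bypass_isPath
  generalize p.bypass = q at hpath
  cases q with
  | nil => exact absurd rfl hx
  | cons h q => exact ⟨_, h, q, ((Walk.cons_isPath_iff _ _).mp hpath).2⟩

lemma mem_sideComp_or_mem_sideComp_swap (hT : G.IsTree) (hadj : G.Adj u v) (x : V) :
    x ∈ sideComp G u v ∨ x ∈ sideComp G v u := by
  by_cases hxu : x = u
  · subst hxu
    exact .inr (mem_sideComp_self hadj.ne')
  obtain ⟨y, huy, q, hq⟩ := hT.exists_adj_mem_sideComp hxu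
  by_cases hyv : y = v
  · exact .inl (hyv ▸ ⟨q, hq⟩)
  refine .inr ⟨.cons huy q, ?_⟩
  rintro (_ | ⟨_, hvq⟩)
  · exact hadj.ne rfl
  · exact hyv (hT.eq_of_adj_of_mem_sideComp huy hadj (mem_sideComp_of_mem_support q hq hvq)).symm

lemma mem_sideComp_swap_iff (hT : G.IsTree) (hadj : G.Adj u v) :
    x ∈ sideComp G v u ↔ x = u ∨ ∃ w, G.Adj u w ∧ w ≠ v ∧ x ∈ sideComp G u w := by
  constructor
  · intro hx
    by_cases hxu : x = u
    · exact .inl hxu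
    obtain ⟨w, huw, hxw⟩ := hT.exists_adj_mem_sideComp hxu
    refine .inr ⟨w, huw, ?_, hxw⟩
    rintro rfl
    exact hT.notMem_sideComp_swap hadj hxw hx
  · rintro (rfl | ⟨w, huw, hwv, hxw⟩)
    · exact mem_sideComp_self hadj.ne'
    refine (hT.mem_sideComp_or_mem_sideComp_swap hadj x).resolve_left fun hxv => hwv ?_
    exact hT.eq_of_adj_of_mem_sideComp hadj huw
      (sideComp_subset_of_mem hxv (mem_sideComp_comm hxw))

lemma mem_sideComp_of_adj_of_ne (hT : G.IsTree) (huv : G.Adj u v) {a b : V} (hab : G.Adj a b)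
    (hne : s(a, b) ≠ s(u, v)) (ha : a ∈ sideComp G u v) : b ∈ sideComp G u v := by
  refine mem_sideComp_of_adj ha hab fun hbu => hne ?_
  subst hbu
  rw [hT.eq_of_adj_of_mem_sideComp huv hab.symm ha, Sym2.eq_swap]

lemma exists_mem_sideComp_iff_forall (hT : G.IsTree) (huv : G.Adj u v) {e : Sym2 V}
    (he : e ∈ G.edgeSet) (hne : e ≠ s(u, v)) :
    (∃ x ∈ e, x ∈ sideComp G u v) ↔ ∀ x ∈ e, x ∈ sideComp G u v := by
  induction e using Sym2.ind with
  | _ a b =>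
    rw [mem_edgeSet] at he
    have hab := hT.mem_sideComp_of_adj_of_ne huv he hne
    have hba := hT.mem_sideComp_of_adj_of_ne huv he.symm (Sym2.eq_swap ▸ hne)
    simp only [Sym2.mem_iff, exists_eq_or_imp, exists_eq_left, forall_eq_or_imp, forall_eq]
    tauto

end SimpleGraph.IsTree

lemma Finset.sum_filter_eq_add_sum_filter {α M : Type*} [AddCommMonoid M] {s : Finset α}
    {p q : α → Prop} [DecidablePred p] [DecidablePred q] {a : α} (ha : a ∈ s) (hpa : p a)
    (hqa : ¬q a) (hpq : ∀ x ∈ s, x ≠ a → (p x ↔ q x)) (f : α → M) :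
    ∑ x ∈ s with p x, f x = f a + ∑ x ∈ s with q x, f x := by
  classical
  have hfilter : s.filter p = insert a (s.filter q) := by
    ext x
    by_cases hxa : x = a
    · simp [hxa, ha, hpa]
    · simpa [hxa] using fun hx => hpq x hx hxa
  rw [hfilter, Finset.sum_insert (by simp [hqa])]

section Deviation

open SimpleGraph

variable [Fintype V] {G : SimpleGraph V} {ℓ : Sym2 V → ℝ} {u v w : V}

lemma sideLength_eq_branchLength (hT : G.IsTree) (hadj : G.Adj u v) :
    sideLength G ℓ u v = branchLength G ℓ u v :=
  Finset.sum_filter_eq_add_sum_filter (by simpa using hadj)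
    ⟨v, Sym2.mem_mk_right u v, mem_sideComp_self hadj.ne⟩
    (fun h => notMem_sideComp (h u (Sym2.mem_mk_left u v)))
    (fun _ he hne => hT.exists_mem_sideComp_iff_forall hadj (mem_edgeFinset.mp he) hne) ℓ

lemma deviation_add_deviation_swap (hT : G.IsTree) (htot : totalLength G ℓ = leafLength G)
    (hadj : G.Adj u v) : deviation G ℓ u v + deviation G ℓ v u = 1 - ℓ s(u, v) := by
  have hswap : ∀ x, x ∈ sideComp G v u ↔ x ∉ sideComp G u v := fun x =>
    ⟨fun hx hx' => hT.notMem_sideComp_swap hadj hx' hx,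
      (hT.mem_sideComp_or_mem_sideComp_swap hadj x).resolve_left⟩
  have hleaves : sideLeafCount G u v + sideLeafCount G v u = (leafSet G).card := by
    rw [sideLeafCount, sideLeafCount, Finset.filter_congr fun x _ => hswap x,
      Finset.card_filter_add_card_filter_not]
  have hedges : totalLength G ℓ = sideLength G ℓ u v + (sideLength G ℓ v u - ℓ s(u, v)) := by
    rw [sideLength_eq_branchLength hT hadj.symm, branchLength, Sym2.eq_swap,
      add_sub_cancel_left, totalLength, sideLength,
      ← Finset.sum_filter_add_sum_filter_not _ (fun e => ∃ x ∈ e, x ∈ sideComp G u v)]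
    congr 2
    refine Finset.filter_congr fun e _ => ?_
    simp only [not_exists, not_and, hswap]
  rw [leafLength] at htot
  simp only [deviation]
  have : (sideLeafCount G u v : ℝ) + sideLeafCount G v u = (leafSet G).card := by
    exact_mod_cast hleaves
  linarith

lemma sideComp_swap_eq_singleton (hT : G.IsTree) (hadj : G.Adj u v) (hdeg : G.degree u = 1) :
    sideComp G v u = {u} := by
  ext x
  rw [hT.mem_sideComp_swap_iff hadj, Set.mem_singleton_iff, or_iff_left_iff_imp]
  rintro ⟨w, huw, hwv, -⟩
  exact absurd (Finset.card_le_one.mp hdeg.le w (by simpa) v (by simpa)) hwv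

lemma neighborFinset_eq_pair (hv : G.Adj u v) (hw : G.Adj u w) (hvw : v ≠ w)
    (hdeg : G.degree u = 2) : G.neighborFinset u = {v, w} :=
  (Finset.eq_of_subset_of_card_le (by simp [Finset.insert_subset_iff, hv, hw])
    (by rw [card_neighborFinset_eq_degree, hdeg, Finset.card_pair hvw])).symm

lemma sideComp_swap_eq_insert (hT : G.IsTree) (hv : G.Adj u v) (hw : G.Adj u w) (hvw : v ≠ w)
    (hdeg : G.degree u = 2) : sideComp G v u = insert u (sideComp G u w) := by
  ext x
  rw [hT.mem_sideComp_swap_iff hv, Set.mem_insert_iff]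
  refine or_congr_right ⟨fun ⟨w', huw', hw'v, hxw'⟩ => ?_, fun hxw => ⟨w, hw, hvw.symm, hxw⟩⟩
  have hw' : w' ∈ G.neighborFinset u := by simpa using huw'
  rw [neighborFinset_eq_pair hv hw hvw hdeg] at hw'
  simp_all

lemma deviation_eq_zero_of_degree_eq_one (hT : G.IsTree) (htot : totalLength G ℓ = leafLength G)
    (hadj : G.Adj u v) (hdeg : G.degree u = 1) : deviation G ℓ u v = 0 := by
  have hC := sideComp_swap_eq_singleton hT hadj hdeg
  have hleaves : sideLeafCount G v u = 1 := by
    have hu : u ∈ leafSet G := Finset.mem_filter.mpr ⟨Finset.mem_univ u, hdeg⟩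
    rw [sideLeafCount, hC, Finset.card_eq_one]
    exact ⟨u, Finset.eq_singleton_iff_unique_mem.mpr ⟨by simpa using hu, by simp⟩⟩
  have hlength : sideLength G ℓ v u = ℓ s(u, v) := by
    rw [sideLength_eq_branchLength hT hadj.symm, branchLength, Sym2.eq_swap, hC,
      add_eq_left]
    refine Finset.sum_eq_zero fun e he => ?_
    obtain ⟨he, hall⟩ := Finset.mem_filter.mp he
    induction e using Sym2.ind with
    | _ a b =>
      have hau : a = u := hall a (Sym2.mem_mk_left a b)
      have hbu : b = u := hall b (Sym2.mem_mk_right a b)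
      exact absurd (hau.trans hbu.symm) (mem_edgeFinset.mp he).ne
  have hvu : deviation G ℓ v u = 1 - ℓ s(u, v) := by
    rw [deviation, hleaves, hlength, Nat.cast_one]
  linarith [deviation_add_deviation_swap hT htot hadj]

lemma deviation_eq_add_deviation_of_degree_eq_two (hT : G.IsTree) (hv : G.Adj u v)
    (hw : G.Adj u w) (hvw : v ≠ w) (hdeg : G.degree u = 2) :
    deviation G ℓ u v = ℓ s(u, w) + deviation G ℓ w u := by
  have hC := sideComp_swap_eq_insert hT hw hv hvw.symm hdeg
  have hleaves : sideLeafCount G w u = sideLeafCount G u v := by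
    rw [sideLeafCount, sideLeafCount]
    congr 1
    refine Finset.filter_congr fun x hx => ?_
    have hxu : x ≠ u := by
      rintro rfl
      have : G.degree x = 1 := (Finset.mem_filter.mp hx).2
      omega
    rw [hC, Set.mem_insert_iff, or_iff_right hxu]
  have hlength : sideLength G ℓ w u = ℓ s(u, w) + sideLength G ℓ u v := by
    refine Finset.sum_filter_eq_add_sum_filter (by simpa using hw)
      ⟨u, Sym2.mem_mk_left u w, mem_sideComp_self hw.ne'⟩ ?_ ?_ ℓ
    · rintro ⟨x, hx, hxv⟩
      rcases Sym2.mem_iff.mp hx with rfl | rfl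
      · exact notMem_sideComp hxv
      · exact hvw (hT.eq_of_adj_of_mem_sideComp hv hw hxv).symm
    · intro e he hne
      rw [hC]
      refine ⟨?_, fun ⟨x, hxe, hxv⟩ => ⟨x, hxe, Set.mem_insert_of_mem u hxv⟩⟩
      rintro ⟨x, hxe, rfl | hxv⟩
      · obtain ⟨b, rfl⟩ := Sym2.mem_iff_exists.mp hxe
        have hb : b ∈ G.neighborFinset x := by simpa using he
        rw [neighborFinset_eq_pair hv hw hvw hdeg, Finset.mem_insert,
          Finset.mem_singleton] at hb
        rcases hb with rfl | rfl
        · exact ⟨b, Sym2.mem_mk_right x b, mem_sideComp_self hv.ne⟩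
        · exact absurd rfl hne
      · exact ⟨x, hxe, hxv⟩
  rw [deviation, deviation, hleaves, hlength]
  ring

lemma deviation_nonneg {u v : V} (hT : G.IsTree) (hℓ : ∀ e ∈ G.edgeSet, 0 ≤ ℓ e)
    (hsb : ShortBranched G ℓ) (hadj : G.Adj u v) : 0 ≤ deviation G ℓ u v := by
  have hpos : 0 < G.degree u := G.degree_pos_iff_exists_adj u |>.mpr ⟨v, hadj⟩
  obtain hdeg | hdeg | hdeg : G.degree u = 1 ∨ G.degree u = 2 ∨ 3 ≤ G.degree u := by omega
  · exact (deviation_eq_zero_of_degree_eq_one hT hsb.1 hadj hdeg).ge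
  · obtain ⟨w, hw, hwv⟩ : ∃ w, G.Adj u w ∧ w ≠ v := by
      simpa using Finset.exists_mem_ne (s := G.neighborFinset u) (by simp [hdeg]) v
    rw [deviation_eq_add_deviation_of_degree_eq_two hT hadj hw (Ne.symm hwv) hdeg]
    have := deviation_nonneg hT hℓ hsb hw.symm
    linarith [hℓ s(u, w) hw]
  · have := hsb.2 u v hdeg hadj
    rw [deviation, sideLength_eq_branchLength hT hadj]
    linarith
termination_by (sideComp G v u).ncard
decreasing_by
  rw [sideComp_swap_eq_insert hT hadj hw (Ne.symm hwv) hdeg,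
    Set.ncard_insert_of_notMem notMem_sideComp (Set.toFinite _)]
  exact Nat.lt_succ_self _

end Deviation

theorem barycentric_factor_bounds_general [Fintype V] (G : SimpleGraph V)
    (ℓ : Sym2 V → ℝ) (hT : G.IsTree)
    (hℓ : ∀ e ∈ G.edgeSet, 0 < ℓ e) (hsb : ShortBranched G ℓ)
    (u v : V) (hadj : G.Adj u v) :
    0 < 1 - deviation G ℓ v u ∧
      0 ≤ deviation G ℓ u v / (1 - deviation G ℓ v u) ∧
      deviation G ℓ u v / (1 - deviation G ℓ v u) ≤ 1 := by
  have hsum := deviation_add_deviation_swap hT hsb.1 hadj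
  have hnonneg := deviation_nonneg hT (fun e he => (hℓ e he).le) hsb hadj
  have hedge := hℓ s(u, v) hadj
  have hpos : 0 < 1 - deviation G ℓ v u := by linarith
  exact ⟨hpos, div_nonneg hnonneg hpos.le, (div_le_one hpos).mpr (by linarith)⟩

/-- **The barycentric factors are well defined** (Corollary of Lemma A.4): for adjacent
vertices `u` and `v` of a short-branched tree with strictly positive edge lengths,
`1 - D(v,u)` is strictly positive and `D(u,v)/(1 - D(v,u))` lies between `0` and `1`. -/
theorem barycentric_factor_bounds [Fintype V] [DecidableEq V] (G : SimpleGraph V)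
    (ℓ : Sym2 V → ℝ) (hT : G.IsTree) (hV : 1 < Fintype.card V)
    (hℓ : ∀ e ∈ G.edgeSet, 0 < ℓ e) (hsb : ShortBranched G ℓ)
    (u v : V) (hadj : G.Adj u v) :
    0 < 1 - deviation G ℓ v u ∧
      0 ≤ deviation G ℓ u v / (1 - deviation G ℓ v u) ∧
      deviation G ℓ u v / (1 - deviation G ℓ v u) ≤ 1 :=
  barycentric_factor_bounds_general G ℓ hT hℓ hsb u v hadj
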